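/- arXiv:0907.1678 — 3 statements merged into one kernel-verified Lean document; each statement's English description precedes it below -/
import Mathlib

section
/- Let n ≥ 2 and let H be the hypergraph with vertex set V = {1, …, n} and the single hyperedge V. Then the radio cover time of the simple random walk on H equals 1, while its cover time equals n · H_{n−1}, where H_{n−1} = Σ_{i=1}^{n−1} 1/i is the (n−1)-st harmonic number; in particular the ratio C/C̃ is Θ(n log n), so the O(n log n) bound on the radio speedup of the cover time is tight. -/
/-!
In the single-edge hypergraph every step chooses the edge `V` and then a uniform vertex, so a
trajectory of length `t` is a uniform word in `V^t`. Every vertex hears the first step, hence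
`C̃ = 1`. The cover time is the coupon-collector tail sum `∑_t P(t uniform draws miss some
u ≠ X(0))`; inclusion–exclusion over the missed vertices writes this probability as
`∑_k (-1)^k C(n-1,k+1) (1 - (k+1)/n)^t`, the geometric series sum to
`n ∑_k (-1)^k C(n-1,k+1)/(k+1)`, and this alternating sum is the harmonic number `H_{n-1}`.
-/

open scoped ENNReal Classical
open Finset

/-- A hypergraph: a finite nonempty family of nonempty hyperedges over a finite vertex set. -/
structure FinHypergraph (V : Type) [Fintype V] [DecidableEq V] where
  edges : Finset (Finset V)
  edges_nonempty : edges.Nonempty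
  mem_nonempty : ∀ e ∈ edges, e.Nonempty

namespace FinHypergraph

variable {V : Type} [Fintype V] [DecidableEq V]

/-- The degree `d(v)` of a vertex: the number of hyperedges containing it. -/
def degV (H : FinHypergraph V) (v : V) : ℕ := (H.edges.filter (fun e => v ∈ e)).card

/-- The rank of a hypergraph: the maximum cardinality of a hyperedge. -/
def rank (H : FinHypergraph V) : ℕ := H.edges.sup Finset.card

/-- Connectivity: every vertex lies in some hyperedge, and any two vertices are joined
by a hyperpath (consecutive vertices share a hyperedge). -/
def Connected (H : FinHypergraph V) : Prop :=
  (∀ v : V, ∃ e ∈ H.edges, v ∈ e) ∧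
    ∀ u v : V, Relation.ReflTransGen (fun a b => ∃ e ∈ H.edges, a ∈ e ∧ b ∈ e) u v

/-- One step of the simple random walk: from vertex `v`, the probability of choosing
hyperedge `p.1` (uniform among the edges containing `v`) and then vertex `p.2`
(uniform inside `p.1`). -/
noncomputable def stepProb (H : FinHypergraph V) (v : V) (p : Finset V × V) : ℝ≥0∞ :=
  if p.1 ∈ H.edges ∧ v ∈ p.1 ∧ p.2 ∈ p.1 then
    ((H.degV v : ℝ≥0∞) * (p.1.card : ℝ≥0∞))⁻¹ else 0

/-- The vertex visited at time `s` along a trajectory `w` (a list of (edge, next vertex)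
pairs) started at `v`; `vAt v w 0 = v`. -/
def vAt (v : V) {t : ℕ} (w : Fin t → Finset V × V) : ℕ → V
  | 0 => v
  | s + 1 => if h : s < t then (w ⟨s, h⟩).2 else v

/-- Probability of a finite trajectory of the simple random walk started at `v`. -/
noncomputable def trajProb (H : FinHypergraph V) (v : V) {t : ℕ}
    (w : Fin t → Finset V × V) : ℝ≥0∞ :=
  ∏ s : Fin t, H.stepProb (vAt v w s) (w s)

/-- Probability that the length-`t` trajectory of the walk started at `v` satisfies `A`. -/
noncomputable def pr (H : FinHypergraph V) (v : V) (t : ℕ)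
    (A : (Fin t → Finset V × V) → Prop) : ℝ≥0∞ :=
  ∑ w : Fin t → Finset V × V, if A w then H.trajProb v w else 0

/-- Expected cover time from `v`: `E[max_u T_v^u] = ∑_t Pr[some vertex unvisited by time t]`. -/
noncomputable def coverFrom (H : FinHypergraph V) (v : V) : ℝ≥0∞ :=
  ∑' t : ℕ, H.pr v t (fun w => ∃ u : V, ∀ s : ℕ, s ≤ t → vAt v w s ≠ u)

/-- The cover time `C` of the hypergraph. -/
noncomputable def coverTime (H : FinHypergraph V) : ℝ≥0∞ := ⨆ v : V, H.coverFrom v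

/-- Expected radio cover time from `v`: `u` has heard the walk by time `t` iff `u = X(0)`
or `u ∈ e(s)` for some `s < t`. -/
noncomputable def radioCoverFrom (H : FinHypergraph V) (v : V) : ℝ≥0∞ :=
  ∑' t : ℕ, H.pr v t (fun w => ∃ u : V, u ≠ v ∧ ∀ s : Fin t, u ∉ (w s).1)

/-- The radio cover time `C̃` of the hypergraph. -/
noncomputable def radioCoverTime (H : FinHypergraph V) : ℝ≥0∞ := ⨆ v : V, H.radioCoverFrom v

/-- The hitting time `h(v,u) = E[inf{t : X(t) = u}]`. -/
noncomputable def hitting (H : FinHypergraph V) (v u : V) : ℝ≥0∞ :=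
  ∑' t : ℕ, H.pr v t (fun w => ∀ s : ℕ, s ≤ t → vAt v w s ≠ u)

/-- The radio hitting time `h̃(v,u)`: expected first time by which `u` has heard the walk. -/
noncomputable def radioHitting (H : FinHypergraph V) (v u : V) : ℝ≥0∞ :=
  ∑' t : ℕ, H.pr v t (fun w => u ≠ v ∧ ∀ s : Fin t, u ∉ (w s).1)

/-- The maximum hitting time `h_max`. -/
noncomputable def maxHitting (H : FinHypergraph V) : ℝ≥0∞ := ⨆ v : V, ⨆ u : V, H.hitting v u

/-- The maximum radio hitting time `h̃_max`. -/
noncomputable def maxRadioHitting (H : FinHypergraph V) : ℝ≥0∞ :=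
  ⨆ v : V, ⨆ u : V, H.radioHitting v u

end FinHypergraph

/-- The hypergraph on `Fin n` with the single hyperedge consisting of all vertices. -/
def singleEdgeHG (n : ℕ) (hn : 0 < n) : FinHypergraph (Fin n) where
  edges := {(Finset.univ : Finset (Fin n))}
  edges_nonempty := Finset.singleton_nonempty _
  mem_nonempty := by
    intro e he
    rw [Finset.mem_singleton] at he
    subst he
    haveI : Nonempty (Fin n) := Fin.pos_iff_nonempty.mp hn
    exact Finset.univ_nonempty

theorem sum_alternating_choose_succ_eq_one {R : Type*} [CommRing R] (m : ℕ) :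
    ∑ k ∈ range (m + 1), (-1 : R) ^ k * (m + 1).choose (k + 1) = 1 := by
  have h := Int.alternating_sum_range_choose_of_ne (Nat.succ_ne_zero m)
  rw [sum_range_succ'] at h
  simp only [pow_succ, mul_neg_one, neg_mul, sum_neg_distrib, pow_zero,
    Nat.choose_zero_right, Nat.cast_one, mul_one, Nat.succ_eq_add_one] at h
  exact_mod_cast congrArg (Int.cast : ℤ → R) (neg_add_eq_zero.mp h)

theorem sum_alternating_choose_div_eq_harmonic {K : Type*} [Field K] [CharZero K] (m : ℕ) :
    ∑ k ∈ range m, (-1 : K) ^ k * m.choose (k + 1) / (k + 1) =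
      ∑ k ∈ range m, 1 / ((k : K) + 1) := by
  induction m with
  | zero => simp
  | succ m ih =>
    have absorb : ∀ k : ℕ, (m.choose k : K) / (k + 1) = (m + 1).choose (k + 1) / (m + 1) := by
      intro k
      rw [div_eq_div_iff (Nat.cast_add_one_ne_zero k) (Nat.cast_add_one_ne_zero m)]
      norm_cast
      linarith [Nat.add_one_mul_choose_eq m k]
    calc ∑ k ∈ range (m + 1), (-1 : K) ^ k * (m + 1).choose (k + 1) / (k + 1)
        = ∑ k ∈ range (m + 1), (-1 : K) ^ k * m.choose (k + 1) / (k + 1)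
          + ∑ k ∈ range (m + 1), (-1 : K) ^ k * (m.choose k / (k + 1)) := by
          rw [← sum_add_distrib]
          refine sum_congr rfl fun k _ => ?_
          rw [Nat.choose_succ_succ', Nat.cast_add]
          ring
      _ = ∑ k ∈ range m, 1 / ((k : K) + 1) + 1 / ((m : K) + 1) := by
          simp only [absorb, ← mul_div_assoc, ← sum_div, sum_alternating_choose_succ_eq_one]
          rw [sum_range_succ, Nat.choose_succ_self, ih]
          simp
      _ = ∑ k ∈ range (m + 1), 1 / ((k : K) + 1) := (sum_range_succ _ _).symm

section Occupancy

variable {α : Type*} [Fintype α] [DecidableEq α]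

theorem card_filter_forall_notMem (S : Finset α) (t : ℕ) :
    #{x : Fin t → α | ∀ i, x i ∉ S} = (Fintype.card α - #S) ^ t := by
  have : ({x : Fin t → α | ∀ i, x i ∉ S} : Finset _) = Fintype.piFinset fun _ => Sᶜ := by
    ext x
    simp [Fintype.mem_piFinset]
  simp [this, Fintype.card_piFinset, card_compl]

theorem card_filter_exists_mem_forall_ne {R : Type*} [CommRing R] (U : Finset α) (t : ℕ) :
    (#{x : Fin t → α | ∃ u ∈ U, ∀ i, x i ≠ u} : R) =
      ∑ k ∈ range #U, (-1) ^ k * (#U).choose (k + 1) * ((Fintype.card α : R) - (k + 1)) ^ t := by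
  set miss : α → Finset (Fin t → α) := fun u => {x | ∀ i, x i ≠ u}
  have missSome_eq :
      ({x : Fin t → α | ∃ u ∈ U, ∀ i, x i ≠ u} : Finset _) = (U.inf fun u => (miss u)ᶜ)ᶜ := by
    ext x
    simp [miss]
  have inf_miss : ∀ S : Finset α, S.inf miss = ({x : Fin t → α | ∀ i, x i ∉ S} : Finset _) := by
    intro S
    ext x
    simp only [miss, mem_inf, mem_filter, mem_univ, true_and]
    exact ⟨fun h i hi => h _ hi i rfl, fun h u hu i hi => h i (hi ▸ hu)⟩
  have ie := congrArg (Int.cast : ℤ → R) (inclusion_exclusion_card_inf_compl U miss)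
  simp only [inf_miss, card_filter_forall_notMem] at ie
  push_cast [Nat.cast_sub (card_le_univ _)] at ie
  rw [missSome_eq, card_compl, Nat.cast_sub (card_le_univ _), ie, sum_powerset_apply_card
    (fun k => (-1 : R) ^ k * ((Fintype.card α : R) - k) ^ t), sum_range_succ']
  simp only [Fintype.card_fun, Fintype.card_fin, Nat.cast_pow, nsmul_eq_mul, Nat.choose_zero_right]
  push_cast
  rw [pow_zero, one_mul, one_mul, sub_zero, sub_add_cancel_right, ← sum_neg_distrib]
  refine sum_congr rfl fun k _ => ?_
  ring

theorem hasSum_card_filter_exists_mem_forall_ne_div_pow (U : Finset α) :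
    HasSum (fun t => (#{x : Fin t → α | ∃ u ∈ U, ∀ i, x i ≠ u} : ℝ) / Fintype.card α ^ t)
      (Fintype.card α * ∑ k ∈ range #U, 1 / ((k : ℝ) + 1)) := by
  set N : ℝ := (Fintype.card α : ℝ) with N_def
  have succ_le : ∀ k ∈ range #U, (k : ℝ) + 1 ≤ N := fun k hk => by
    rw [N_def]
    exact_mod_cast (mem_range.mp hk).trans_le (card_le_univ U)
  have geom : ∀ k ∈ range #U,
      HasSum (fun t => (-1) ^ k * ((#U).choose (k + 1) : ℝ) * ((N - (k + 1)) / N) ^ t)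
        (N * ((-1) ^ k * (#U).choose (k + 1) / (k + 1))) := fun k hk => by
    have hN : 0 < N := by linarith [succ_le k hk]
    have ratio_lt_one : (N - (k + 1)) / N < 1 := by
      rw [div_lt_one hN]
      linarith
    have value : N * ((-1) ^ k * (#U).choose (k + 1) / (k + 1)) =
        (-1) ^ k * (#U).choose (k + 1) * (1 - (N - (k + 1)) / N)⁻¹ := by
      field_simp
      ring
    rw [value]
    exact (hasSum_geometric_of_lt_one (div_nonneg (by linarith [succ_le k hk]) hN.le)
      ratio_lt_one).mul_left _
  convert hasSum_sum geom using 1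
  · ext t
    rw [card_filter_exists_mem_forall_ne, sum_div]
    refine sum_congr rfl fun k _ => ?_
    rw [div_pow, mul_div_assoc]
  · rw [← mul_sum, sum_alternating_choose_div_eq_harmonic]

end Occupancy

namespace FinHypergraph

variable {V : Type}

theorem vAt_succ (v : V) {t : ℕ} (w : Fin t → Finset V × V) (i : Fin t) :
    vAt v w (i + 1) = (w i).2 := by
  simp [vAt]

theorem forall_le_vAt_ne_iff (v u : V) {t : ℕ} (w : Fin t → Finset V × V) :
    (∀ s ≤ t, vAt v w s ≠ u) ↔ v ≠ u ∧ ∀ i : Fin t, (w i).2 ≠ u := by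
  refine ⟨fun h => ⟨h 0 t.zero_le, fun i => vAt_succ v w i ▸ h (i + 1) i.isLt⟩, ?_⟩
  rintro ⟨hv, hw⟩ (_ | s) hs
  · exact hv
  · exact vAt_succ v w ⟨s, hs⟩ ▸ hw ⟨s, hs⟩

end FinHypergraph

namespace singleEdgeHG

open FinHypergraph

variable {n : ℕ} (h : 0 < n)

def lift {t : ℕ} (x : Fin t → Fin n) : Fin t → Finset (Fin n) × Fin n := fun s => (univ, x s)

theorem trajProb_eq (v : Fin n) {t : ℕ} (w : Fin t → Finset (Fin n) × Fin n) :
    (singleEdgeHG n h).trajProb v w = if ∀ s, (w s).1 = univ then (n : ℝ≥0∞)⁻¹ ^ t else 0 := by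
  have stepProb_eq : ∀ u p,
      (singleEdgeHG n h).stepProb u p = if p.1 = univ then (n : ℝ≥0∞)⁻¹ else 0 := by
    intro u p
    split_ifs with hp <;> simp [stepProb, degV, singleEdgeHG, filter_singleton, hp]
  simp only [trajProb, stepProb_eq]
  split_ifs with hw
  · simp [hw]
  · obtain ⟨s, hs⟩ := not_forall.mp hw
    exact prod_eq_zero (mem_univ s) (if_neg hs)

theorem pr_eq (v : Fin n) (t : ℕ) (A : (Fin t → Finset (Fin n) × Fin n) → Prop) :
    (singleEdgeHG n h).pr v t A = #{x : Fin t → Fin n | A (lift x)} * (n : ℝ≥0∞)⁻¹ ^ t := by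
  have lift_injective : Function.Injective (lift (n := n) (t := t)) :=
    fun x y hxy => funext fun s => congrArg (·.2) (congrFun hxy s)
  rw [pr, ← Fintype.sum_of_injective lift lift_injective
    (fun x => if A (lift x) then (n : ℝ≥0∞)⁻¹ ^ t else 0)]
  · rw [← sum_filter, sum_const, nsmul_eq_mul]
  · rintro w hw
    have : ¬ ∀ s, (w s).1 = univ :=
      fun hw' => hw ⟨fun s => (w s).2, funext fun s => Prod.ext (hw' s).symm rfl⟩
    simp [trajProb_eq, this]
  · intro x
    simp [trajProb_eq, lift]

theorem radioCoverFrom_eq_one (hn : 2 ≤ n) (v : Fin n) :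
    (singleEdgeHG n h).radioCoverFrom v = 1 := by
  have : Nontrivial (Fin n) := Fin.nontrivial_iff_two_le.mpr hn
  rw [radioCoverFrom, tsum_eq_single 0]
  · simp [pr_eq, exists_ne v]
  · intro t ht
    have : Nonempty (Fin t) := ⟨⟨0, Nat.pos_of_ne_zero ht⟩⟩
    simp [pr_eq, lift]

theorem coverFrom_eq (v : Fin n) :
    (singleEdgeHG n h).coverFrom v =
      ENNReal.ofReal (n * ∑ k ∈ range (n - 1), 1 / ((k : ℝ) + 1)) := by
  have event : ∀ t (x : Fin t → Fin n),
      (∃ u, ∀ s ≤ t, vAt v (lift x) s ≠ u) ↔ ∃ u ∈ univ.erase v, ∀ i, x i ≠ u := by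
    intro t x
    simp only [forall_le_vAt_ne_iff, lift, mem_erase, mem_univ, and_true, ne_comm (a := v)]
  have term : ∀ t, (singleEdgeHG n h).pr v t (fun w => ∃ u, ∀ s ≤ t, vAt v w s ≠ u) =
      ENNReal.ofReal (#{x : Fin t → Fin n | ∃ u ∈ univ.erase v, ∀ i, x i ≠ u} / n ^ t) := by
    intro t
    rw [pr_eq, ENNReal.ofReal_div_of_pos (by positivity), ENNReal.ofReal_pow (by positivity)]
    simp only [event, ENNReal.ofReal_natCast, div_eq_mul_inv, ENNReal.inv_pow]
  have coupon := hasSum_card_filter_exists_mem_forall_ne_div_pow (univ.erase v)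
  simp only [Fintype.card_fin, card_erase_of_mem (mem_univ v), card_univ] at coupon
  rw [coverFrom, tsum_congr term, ← coupon.tsum_eq]
  -- `convert` only reconciles the two `Decidable` instances of the filter predicate.
  convert (ENNReal.ofReal_tsum_of_nonneg (fun t => by positivity) coupon.summable).symm

end singleEdgeHG

/-- For `n ≥ 2`, the hypergraph on `{1, …, n}` with the single hyperedge
`V` has radio cover time exactly `1` and cover time exactly `n · H_{n-1}`, where
`H_{n-1} = ∑_{i=1}^{n-1} 1/i`; in particular the `O(n log n)` bound on the radio speedup
of the cover time is tight. -/
theorem singleEdge_cover_times (n : ℕ) (hn : 2 ≤ n) :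
    (singleEdgeHG n (by omega)).radioCoverTime = 1 ∧
    (singleEdgeHG n (by omega)).coverTime =
      ENNReal.ofReal ((n : ℝ) * ∑ i ∈ Finset.range (n - 1), (1 : ℝ) / (i + 1)) := by
  have : NeZero n := ⟨by omega⟩
  exact ⟨by simp [FinHypergraph.radioCoverTime, singleEdgeHG.radioCoverFrom_eq_one _ hn],
    by simp [FinHypergraph.coverTime, singleEdgeHG.coverFrom_eq]⟩
end

section
/- Let G be a finite connected simple graph, viewed as an electrical network with unit resistance on every edge, and let w and v be adjacent vertices both of degree d. Then the effective resistance between w and v satisfies R_{wv} ≥ 2/(d+1). -/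
open Finset

/-- A unit flow from `x` to `y` in a simple graph `G`, viewed as an electrical network
with unit resistance on every edge: a skew-symmetric function on ordered pairs of
vertices, supported on edges, satisfying Kirchhoff's node law at every vertex other
than `x` and `y`, with net flow `1` out of `x`. -/
structure UnitFlow {V : Type} [Fintype V] (G : SimpleGraph V) (x y : V) where
  f : V → V → ℝ
  skew : ∀ a b, f b a = -f a b
  support : ∀ a b, f a b ≠ 0 → G.Adj a b
  conserve : ∀ a, a ≠ x → a ≠ y → ∑ b, f a b = 0
  unit : ∑ b, f x b = 1

/-- The energy `∑_{e ∈ E} f(e)²` of a flow (each edge is counted once; on ordered pairs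
this is half the sum). -/
noncomputable def flowEnergy {V : Type} [Fintype V] {G : SimpleGraph V} {x y : V}
    (F : UnitFlow G x y) : ℝ :=
  (1 / 2) * ∑ a : V, ∑ b : V, F.f a b ^ 2

/-- The effective resistance between `x` and `y` in the electrical network with unit
resistance on each edge of `G`, via Thomson's principle: the infimum of the energy over
all unit flows from `x` to `y`. -/
noncomputable def effRes {V : Type} [Fintype V] (G : SimpleGraph V) (x y : V) : ℝ :=
  sInf (Set.range fun F : UnitFlow G x y => flowEnergy F)

lemma two_div_le_of_flow_ineqs (D t a b E : ℝ) (hD : 1 ≤ D)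
    (h1 : (1 - t) ^ 2 ≤ (D - 1) * a) (h2 : (1 - t) ^ 2 ≤ (D - 1) * b)
    (ha : 0 ≤ a) (hb : 0 ≤ b) (hE : t ^ 2 + a + b ≤ E) :
    2 / (D + 1) ≤ E := by
  have hpos : (0:ℝ) < D + 1 := by linarith
  rw [div_le_iff₀ hpos]
  rcases eq_or_lt_of_le hD with hDeq | hDlt
  · have hAz : (1 - t) ^ 2 ≤ 0 := by rw [← hDeq] at h1; linarith
    have ht1 : t = 1 := by nlinarith [sq_nonneg (1 - t)]
    rw [← hDeq]
    nlinarith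
  · have h1' := mul_le_mul_of_nonneg_left h1 (by linarith : (0:ℝ) ≤ D + 1)
    have h2' := mul_le_mul_of_nonneg_left h2 (by linarith : (0:ℝ) ≤ D + 1)
    have h3' := mul_le_mul_of_nonneg_left hE
      (le_of_lt (mul_pos (by linarith : (0:ℝ) < D - 1) hpos))
    nlinarith [sq_nonneg ((D + 1) * t - 2), h1', h2', h3', hDlt]

set_option maxHeartbeats 1000000 in
/-- Key estimate: any unit flow between adjacent vertices of common degree `d` has
energy at least `2/(d+1)`. -/
lemma unitFlow_energy_bound
    (V : Type) [Fintype V] [DecidableEq V] (G : SimpleGraph V) [DecidableRel G.Adj]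
    (w v : V) (hadj : G.Adj w v) (d : ℕ)
    (hdw : G.degree w = d) (hdv : G.degree v = d)
    (f : V → V → ℝ)
    (hskew : ∀ a b, f b a = -f a b)
    (hsupp : ∀ a b, f a b ≠ 0 → G.Adj a b)
    (hcons : ∀ a, a ≠ w → a ≠ v → ∑ b, f a b = 0)
    (hunit : ∑ b, f w b = 1) :
    2 / ((d : ℝ) + 1) ≤ (1 / 2) * ∑ a : V, ∑ b : V, f a b ^ 2 := by
  have hwv : w ≠ v := hadj.ne
  have hvmem : v ∈ G.neighborFinset w := by simpa using hadj
  have hwmem : w ∈ G.neighborFinset v := by simpa using hadj.symm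
  have hd1 : 1 ≤ d := by
    rw [← hdw, ← SimpleGraph.card_neighborFinset_eq_degree]
    exact Finset.card_pos.mpr ⟨v, hvmem⟩
  have hD1 : (1:ℝ) ≤ (d:ℝ) := by exact_mod_cast hd1
  have hfaa : ∀ a, f a a = 0 := fun a => by have := hskew a a; linarith
  have hvw : f v w = -f w v := hskew w v
  -- total antisymmetry: the full double sum vanishes
  have hsum0 : ∑ a : V, ∑ b : V, f a b = 0 := by
    have h0 : ∑ a : V, ∑ b : V, (f a b + f b a) = 0 := by
      have : ∀ a b : V, f a b + f b a = 0 := fun a b => by rw [hskew a b]; ring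
      simp [this]
    have hadd : ∑ a : V, ∑ b : V, (f a b + f b a)
        = (∑ a : V, ∑ b : V, f a b) + ∑ a : V, ∑ b : V, f b a := by
      simp [Finset.sum_add_distrib]
    have hcomm : ∑ a : V, ∑ b : V, f b a = ∑ a : V, ∑ b : V, f a b :=
      Finset.sum_comm
    rw [hadd, hcomm] at h0
    linarith
  have hrest : ∑ a ∈ ({w, v} : Finset V), ∑ b : V, f a b
      = ∑ a : V, ∑ b : V, f a b := by
    apply Finset.sum_subset (Finset.subset_univ _)
    intro a _ ha
    simp only [Finset.mem_insert, Finset.mem_singleton, not_or] at ha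
    exact hcons a ha.1 ha.2
  have hv1 : ∑ b : V, f v b = -1 := by
    rw [hsum0, Finset.sum_pair hwv, hunit] at hrest
    linarith
  -- sums over punctured neighborhoods
  have hcard1 : ((G.neighborFinset w).erase v).card = d - 1 := by
    rw [Finset.card_erase_of_mem hvmem, SimpleGraph.card_neighborFinset_eq_degree, hdw]
  have hcard2 : ((G.neighborFinset v).erase w).card = d - 1 := by
    rw [Finset.card_erase_of_mem hwmem, SimpleGraph.card_neighborFinset_eq_degree, hdv]
  have hflow1 : ∑ b ∈ (G.neighborFinset w).erase v, f w b = 1 - f w v := by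
    have hN : ∑ b ∈ G.neighborFinset w, f w b = ∑ b : V, f w b := by
      apply Finset.sum_subset (Finset.subset_univ _)
      intro b _ hb
      by_contra h
      exact hb (by simpa using hsupp w b h)
    have h := Finset.add_sum_erase _ (fun b => f w b) hvmem
    rw [hN, hunit] at h
    linarith
  have hflow2 : ∑ b ∈ (G.neighborFinset v).erase w, f v b = -1 + f w v := by
    have hN : ∑ b ∈ G.neighborFinset v, f v b = ∑ b : V, f v b := by
      apply Finset.sum_subset (Finset.subset_univ _)
      intro b _ hb
      by_contra h
      exact hb (by simpa using hsupp v b h)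
    have h := Finset.add_sum_erase _ (fun b => f v b) hwmem
    rw [hN, hv1] at h
    simp only [hvw] at h
    linarith
  have hA0 : (0:ℝ) ≤ ∑ b ∈ (G.neighborFinset w).erase v, f w b ^ 2 :=
    Finset.sum_nonneg fun _ _ => sq_nonneg _
  have hB0 : (0:ℝ) ≤ ∑ b ∈ (G.neighborFinset v).erase w, f v b ^ 2 :=
    Finset.sum_nonneg fun _ _ => sq_nonneg _
  have hcast : ((d - 1 : ℕ) : ℝ) = (d : ℝ) - 1 := by
    rw [Nat.cast_sub hd1]; norm_num
  have hCS1 : (1 - f w v) ^ 2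
      ≤ ((d:ℝ) - 1) * ∑ b ∈ (G.neighborFinset w).erase v, f w b ^ 2 := by
    have h := sq_sum_le_card_mul_sum_sq (s := (G.neighborFinset w).erase v)
      (f := fun b => f w b)
    rw [hflow1, hcard1, hcast] at h
    exact h
  have hCS2 : (1 - f w v) ^ 2
      ≤ ((d:ℝ) - 1) * ∑ b ∈ (G.neighborFinset v).erase w, f v b ^ 2 := by
    have h := sq_sum_le_card_mul_sum_sq (s := (G.neighborFinset v).erase w)
      (f := fun b => f v b)
    rw [hflow2, hcard2, hcast] at h
    nlinarith [h]
  -- row sums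
  have hrowW : f w v ^ 2 + ∑ b ∈ (G.neighborFinset w).erase v, f w b ^ 2
      ≤ ∑ b : V, f w b ^ 2 := by
    have hsub : ∑ b ∈ insert v ((G.neighborFinset w).erase v), f w b ^ 2
        ≤ ∑ b : V, f w b ^ 2 :=
      Finset.sum_le_sum_of_subset_of_nonneg (Finset.subset_univ _)
        (fun b _ _ => sq_nonneg _)
    rwa [Finset.sum_insert (Finset.notMem_erase _ _)] at hsub
  have hrowV : f w v ^ 2 + ∑ b ∈ (G.neighborFinset v).erase w, f v b ^ 2
      ≤ ∑ b : V, f v b ^ 2 := by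
    have hsub : ∑ b ∈ insert w ((G.neighborFinset v).erase w), f v b ^ 2
        ≤ ∑ b : V, f v b ^ 2 :=
      Finset.sum_le_sum_of_subset_of_nonneg (Finset.subset_univ _)
        (fun b _ _ => sq_nonneg _)
    rw [Finset.sum_insert (Finset.notMem_erase _ _), hvw] at hsub
    nlinarith [hsub]
  -- energy lower bound: full double sum ≥ 2*(RW + RV) - 2*t²
  have hcompl : ∑ a ∈ ({w, v} : Finset V)ᶜ, (f a w ^ 2 + f a v ^ 2)
      = (∑ b : V, f w b ^ 2) + (∑ b : V, f v b ^ 2) - 2 * f w v ^ 2 := by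
    have hcol : ∑ a : V, (f a w ^ 2 + f a v ^ 2)
        = (∑ b : V, f w b ^ 2) + (∑ b : V, f v b ^ 2) := by
      rw [Finset.sum_add_distrib]
      congr 1 <;> · simp only [hskew w, hskew v, neg_sq]
    have h := Finset.sum_compl_add_sum ({w, v} : Finset V)
      (fun a => f a w ^ 2 + f a v ^ 2)
    rw [hcol, Finset.sum_pair hwv] at h
    rw [hfaa w, hfaa v, hvw] at h
    nlinarith [h]
  have hbound : ∑ a ∈ ({w, v} : Finset V)ᶜ, (f a w ^ 2 + f a v ^ 2)
      ≤ ∑ a ∈ ({w, v} : Finset V)ᶜ, ∑ b : V, f a b ^ 2 := by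
    apply Finset.sum_le_sum
    intro a _
    have hsub : ∑ b ∈ ({w, v} : Finset V), f a b ^ 2 ≤ ∑ b : V, f a b ^ 2 :=
      Finset.sum_le_sum_of_subset_of_nonneg (Finset.subset_univ _)
        (fun b _ _ => sq_nonneg _)
    rwa [Finset.sum_pair hwv] at hsub
  have hsplit := Finset.sum_compl_add_sum ({w, v} : Finset V)
    (fun a => ∑ b : V, f a b ^ 2)
  rw [Finset.sum_pair hwv] at hsplit
  have hEnergy : (∑ b : V, f w b ^ 2) + (∑ b : V, f v b ^ 2) - f w v ^ 2
      ≤ (1 / 2) * ∑ a : V, ∑ b : V, f a b ^ 2 := by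
    rw [← hsplit]
    rw [hcompl] at hbound
    linarith
  -- combine
  have hE2 : f w v ^ 2 + (∑ b ∈ (G.neighborFinset w).erase v, f w b ^ 2)
      + (∑ b ∈ (G.neighborFinset v).erase w, f v b ^ 2)
      ≤ (1 / 2) * ∑ a : V, ∑ b : V, f a b ^ 2 := by
    linarith [hrowW, hrowV, hEnergy]
  exact two_div_le_of_flow_ineqs ((d:ℝ)) (f w v) _ _ _ hD1 hCS1 hCS2 hA0 hB0 hE2

/-- In a finite connected simple graph with unit resistances, if `w`
and `v` are adjacent vertices both of degree `d`, then the effective resistance between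
them satisfies `R_{wv} ≥ 2/(d+1)`. -/
theorem effRes_ge_two_div_degree_add_one
    (V : Type) [Fintype V] [DecidableEq V] (G : SimpleGraph V) [DecidableRel G.Adj]
    (hconn : G.Connected) (w v : V) (hadj : G.Adj w v) (d : ℕ)
    (hdw : G.degree w = d) (hdv : G.degree v = d) :
    2 / ((d : ℝ) + 1) ≤ effRes G w v := by
  have hwv : w ≠ v := hadj.ne
  apply le_csInf
  · refine ⟨flowEnergy (G := G) (x := w) (y := v)
      ⟨fun a b => (if a = w then (1:ℝ) else 0) * (if b = v then 1 else 0)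
        - (if a = v then (1:ℝ) else 0) * (if b = w then 1 else 0), ?_, ?_, ?_, ?_⟩,
      Set.mem_range_self _⟩
    · intro a b; ring
    · intro a b h
      by_cases haw : a = w <;> by_cases hbv : b = v <;> by_cases hav : a = v <;>
        by_cases hbw : b = w <;> simp_all [hadj.symm]
    · intro a haw hav
      simp [haw, hav]
    · simp [hwv, Finset.sum_ite_eq' (Finset.univ : Finset V) v]
  · rintro r ⟨F, rfl⟩
    exact unitFlow_energy_bound V G w v hadj d hdw hdv F.f F.skew F.support
      F.conserve F.unit
end

section
/- Let H be a connected hypergraph, let v be a vertex and U a nonempty set of vertices. Consider the simple random walk X started at v with chosen hyperedges e(0), e(1), …, and let Y be the edge Markov chain on E with transition probabilities Q(e,f) = Σ_{w in e∩f} 1/(δ(e)·d(w)) and initial distribution λ0, where λ0(e) = 1/d(v) if v ∈ e and λ0(e) = 0 otherwise. Let E(U) = {e in E : e ∩ U ≠ ∅}. Then for every t ≥ 0, Pr[ inf{s ≥ 0 : e(s) ∩ U ≠ ∅} ≤ t ] = Pr[ inf{s ≥ 0 : Y(s) ∈ E(U)} ≤ t ]; that is, the index of the first step at which the vertex walk uses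 a hyperedge meeting U has the same distribution as the hitting time of E(U) by the edge chain Y started from λ0. -/
open scoped ENNReal Classical
open Finset

namespace FinHypergraph

variable {V : Type} [Fintype V] [DecidableEq V]

/-- The transition matrix `Q` of the edge chain:
`Q(e,f) = ∑_{w ∈ e ∩ f} 1/(δ(e)·d(w))` for hyperedges `e, f` of `H`. -/
noncomputable def Qmat (H : FinHypergraph V) (e f : Finset V) : ℝ≥0∞ :=
  if e ∈ H.edges ∧ f ∈ H.edges then
    ∑ w ∈ e ∩ f, ((e.card : ℝ≥0∞) * (H.degV w : ℝ≥0∞))⁻¹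
  else 0

/-- The initial distribution `λ0` of the edge chain for the walk started at `v`:
`λ0(e) = 1/d(v)` if `v ∈ e`, and `0` otherwise. -/
noncomputable def lambda0 (H : FinHypergraph V) (v : V) (e : Finset V) : ℝ≥0∞ :=
  if e ∈ H.edges ∧ v ∈ e then (H.degV v : ℝ≥0∞)⁻¹ else 0

/-- Probability that the trajectory `(Y(0), …, Y(t))` of the edge chain `Y` with initial
distribution `λ0` satisfies `A`. -/
noncomputable def edgePr (H : FinHypergraph V) (v : V) (t : ℕ)
    (A : (Fin (t + 1) → Finset V) → Prop) : ℝ≥0∞ :=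
  ∑ y : Fin (t + 1) → Finset V,
    if A y then
      H.lambda0 v (y 0) * ∏ s : Fin t, H.Qmat (y s.castSucc) (y s.succ)
    else 0

end FinHypergraph

/-! The event only involves the hyperedges `e(0), …, e(t)` chosen by the walk, so its
probability is obtained from the joint law of these hyperedges. Summing out the visited vertices
one step at a time, with `∑_z Pr[v → (e, z)] · λ0_z(f) = λ0_v(e) · Q(e, f)`, identifies that
joint law with the law of the edge chain `(Y(0), …, Y(t))` started from `λ0`. -/

namespace FinHypergraph

variable {V : Type}

theorem vAt_cons_succ (v : V) {t : ℕ} (p : Finset V × V) (w : Fin t → Finset V × V)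
    {s : ℕ} (hs : s ≤ t) :
    vAt v (Fin.cons p w : Fin (t + 1) → Finset V × V) (s + 1) = vAt p.2 w s := by
  cases s with
  | zero => simp [vAt]
  | succ k => simp [vAt, Nat.lt_of_succ_le hs]; rfl

variable [Fintype V] [DecidableEq V] (H : FinHypergraph V)

theorem sum_stepProb (u : V) (e : Finset V) :
    ∑ z, H.stepProb u (e, z) = H.lambda0 u e := by
  by_cases h : e ∈ H.edges ∧ u ∈ e
  · have hcard : (#e : ℝ≥0∞) ≠ 0 := by exact_mod_cast (card_pos.mpr ⟨u, h.2⟩).ne'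
    simp only [stepProb, lambda0, h, true_and, if_true, sum_ite_mem, univ_inter, sum_const,
      nsmul_eq_mul]
    rw [ENNReal.mul_inv (by simp) (by simp), mul_left_comm, ENNReal.mul_inv_cancel hcard (by simp),
      mul_one]
  · have h' : ∀ z, ¬(e ∈ H.edges ∧ u ∈ e ∧ z ∈ e) := fun z hz => h ⟨hz.1, hz.2.1⟩
    simp [stepProb, lambda0, h, h']

theorem sum_stepProb_mul_lambda0 (u : V) (e f : Finset V) :
    ∑ z, H.stepProb u (e, z) * H.lambda0 z f = H.lambda0 u e * H.Qmat e f := by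
  by_cases h : e ∈ H.edges ∧ u ∈ e
  swap
  · have h' : ∀ z, ¬(e ∈ H.edges ∧ u ∈ e ∧ z ∈ e) := fun z hz => h ⟨hz.1, hz.2.1⟩
    simp [stepProb, lambda0, h, h']
  by_cases hf : f ∈ H.edges
  swap
  · simp [lambda0, Qmat, hf]
  simp only [stepProb, lambda0, Qmat, h, hf, true_and, if_true, mul_sum, ite_mul, zero_mul,
    mul_ite, mul_zero, ← ite_and, and_comm (a := _ ∈ f), ← mem_inter, sum_ite_mem, univ_inter]
  refine sum_congr rfl fun z _ => ?_
  rw [ENNReal.mul_inv (by simp) (by simp), ENNReal.mul_inv (by simp) (by simp), mul_assoc]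

theorem trajProb_cons (v : V) {t : ℕ} (p : Finset V × V) (w : Fin t → Finset V × V) :
    H.trajProb v (Fin.cons p w : Fin (t + 1) → Finset V × V) =
      H.stepProb v p * H.trajProb p.2 w := by
  simp only [trajProb, Fin.prod_univ_succ, Fin.val_zero, Fin.val_succ, Fin.cons_zero,
    Fin.cons_succ]
  congr 1
  exact prod_congr rfl fun s _ => by rw [vAt_cons_succ v p w s.is_lt.le]

theorem sum_trajProb_zip (n : ℕ) (u : V) (y : Fin (n + 1) → Finset V) :
    ∑ x : Fin (n + 1) → V, H.trajProb u (fun s => (y s, x s)) =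
      H.lambda0 u (y 0) * ∏ s : Fin n, H.Qmat (y s.castSucc) (y s.succ) := by
  induction n generalizing u with
  | zero =>
    rw [Fintype.sum_equiv (Equiv.funUnique (Fin 1) V) _ (fun z => H.stepProb u (y 0, z))
      fun x => by simp [trajProb, vAt], sum_stepProb]
    simp
  | succ n ih =>
    have hzip (z : V) (x : Fin (n + 1) → V) :
        (fun s => (y s, (Fin.cons z x : Fin (n + 2) → V) s)) =
          Fin.cons (y 0, z) (fun s => (y s.succ, x s)) := by
      ext s <;> cases s using Fin.cases <;> simp
    rw [← (Fin.consEquiv fun _ => V).sum_comp, Fintype.sum_prod_type]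
    simp only [Fin.consEquiv_apply, hzip, trajProb_cons, ← mul_sum, ih]
    rw [Fin.prod_univ_succ, Fin.castSucc_zero, ← mul_assoc, ← H.sum_stepProb_mul_lambda0,
      sum_mul]
    simp only [mul_assoc, Fin.succ_castSucc]

theorem pr_comp_fst_eq_edgePr (v : V) (t : ℕ) (A : (Fin (t + 1) → Finset V) → Prop) :
    H.pr v (t + 1) (fun w => A (Prod.fst ∘ w)) = H.edgePr v t A := by
  rw [pr, edgePr, ← (Equiv.arrowProdEquivProdArrow _ _ _).symm.sum_comp, Fintype.sum_prod_type]
  refine sum_congr rfl fun y _ => ?_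
  by_cases hA : A y
  · rw [if_pos hA, ← H.sum_trajProb_zip]
    exact sum_congr rfl fun x _ => if_pos hA
  · rw [if_neg hA]
    exact sum_eq_zero fun x _ => if_neg hA

end FinHypergraph

theorem vertexWalk_edgeChain_radio_distribution_general
    (V : Type) [Fintype V] [DecidableEq V] (H : FinHypergraph V)
    (v : V) (U : Finset V) (t : ℕ) :
    H.pr v (t + 1) (fun w => ∃ s : Fin (t + 1), ((w s).1 ∩ U).Nonempty) =
      H.edgePr v t (fun y => ∃ s : Fin (t + 1), (y s ∩ U).Nonempty) :=
  H.pr_comp_fst_eq_edgePr v t fun y => ∃ s : Fin (t + 1), (y s ∩ U).Nonempty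

/-- For a connected hypergraph `H`, a start vertex `v` and a nonempty
set `U` of vertices, the first step index at which the vertex walk uses a hyperedge
meeting `U` has the same distribution as the hitting time of
`E(U) = {e : e ∩ U ≠ ∅}` by the edge chain `Y` started from `λ0`: for every `t ≥ 0`,
`Pr[inf{s : e(s) ∩ U ≠ ∅} ≤ t] = Pr[inf{s : Y(s) ∈ E(U)} ≤ t]`. -/
theorem vertexWalk_edgeChain_radio_distribution
    (V : Type) [Fintype V] [DecidableEq V] (H : FinHypergraph V) (hconn : H.Connected)
    (v : V) (U : Finset V) (hU : U.Nonempty) (t : ℕ) :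
    H.pr v (t + 1) (fun w => ∃ s : Fin (t + 1), ((w s).1 ∩ U).Nonempty) =
      H.edgePr v t (fun y => ∃ s : Fin (t + 1), (y s ∩ U).Nonempty) :=
  vertexWalk_edgeChain_radio_distribution_general V H v U t
end
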